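/- Let κ ≥ 1, let H : ℝ^d → ℝ be (κ+1) times continuously differentiable, and let ḡ : ℝ^d × ℝ^d → ℝ^d satisfy the discrete gradient condition ⟨ḡ(x,y), y−x⟩ = H(y) − H(x) for all x, y, with y ↦ ḡ(x,y) κ times continuously differentiable. If the Jacobian D₂ḡ(x,y) is a symmetric matrix for all y ∈ ℝ^d, then for all v ∈ ℝ^d, D^κ∇H(x)(v,…,v) = (κ+1) · D₂^κḡ(x,x)(v,…,v), where D₂^κḡ(x,x) denotes the κ-th derivative of y ↦ ḡ(x,y) at y = x and D^κ∇H(x) the κ-th derivative of ∇H at x. -/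

import Mathlib

open scoped RealInnerProductSpace
/-!
Differentiating `⟪ḡ(x, y), y - x⟫ = H y - H x` in `y` and using the symmetry of `D₂ḡ(x, y)` gives
`∇H y = ḡ(x, y) + D₂ḡ(x, y) (y - x)`. On the line `y = x + t • v` this says that
`t ↦ ∇H (x + t • v)` is the derivative of `t ↦ t • G t` with `G t = ḡ(x, x + t • v)`, and the
`(κ + 1)`-st derivative of `t • G t` at `t = 0` is `(κ + 1) • G⁽ᵏ⁾ 0`.
-/

section OneVariable

variable {𝕜 : Type*} [NontriviallyNormedField 𝕜] {F : Type*} [NormedAddCommGroup F]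
  [NormedSpace 𝕜 F]

theorem hasDerivAt_id_smul_zero_of_continuousAt {w : 𝕜 → F} (hw : ContinuousAt w 0) :
    HasDerivAt (fun t => t • w t) (w 0) 0 := by
  rw [hasDerivAt_iff_tendsto_slope]
  refine (hw.tendsto.mono_left nhdsWithin_le_nhds).congr' ?_
  filter_upwards [self_mem_nhdsWithin] with t (ht : t ≠ 0)
  simp [slope_def_module, smul_smul, inv_mul_cancel₀ ht]

/- `w` is only `C^m`, so `t • w t` need not be `C^(m+1)` and the Leibniz rule does not apply;
the induction therefore tracks one derivative at `0` only. -/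
theorem hasDerivAt_iteratedDeriv_id_smul_zero (m : ℕ) {w : 𝕜 → F} (hw : ContDiff 𝕜 m w) :
    HasDerivAt (iteratedDeriv m fun t => t • w t) ((m + 1 : 𝕜) • iteratedDeriv m w 0) 0 := by
  induction m generalizing w with
  | zero => simpa using hasDerivAt_id_smul_zero_of_continuousAt hw.continuous.continuousAt
  | succ m ih =>
    have hw' : ContDiff 𝕜 (m + 1) w := mod_cast hw
    have hderiv : deriv (fun t => t • w t) = fun t => w t + t • deriv w t := by
      funext t
      rw [deriv_fun_smul differentiableAt_fun_id (hw'.differentiable (by simp) t)]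
      simp only [deriv_id'', one_smul, add_comm]
    have hsplit : iteratedDeriv m (fun t => w t + t • deriv w t)
        = fun t => iteratedDeriv m w t + iteratedDeriv m (fun t => t • deriv w t) t := by
      funext t
      exact iteratedDeriv_fun_add (hw'.of_le (by simp)).contDiffAt
        (contDiff_id.smul hw'.deriv').contDiffAt
    have hw_deriv : HasDerivAt (iteratedDeriv m w) (iteratedDeriv (m + 1) w 0) 0 := by
      rw [iteratedDeriv_succ]
      exact (hw'.differentiable_iteratedDeriv' m 0).hasDerivAt
    rw [iteratedDeriv_succ', hderiv, hsplit]
    refine (hw_deriv.add (ih hw'.deriv')).congr_deriv ?_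
    rw [← iteratedDeriv_succ']
    push_cast
    module

theorem iteratedDeriv_succ_id_smul_zero (m : ℕ) {w : 𝕜 → F} (hw : ContDiff 𝕜 m w) :
    iteratedDeriv (m + 1) (fun t => t • w t) 0 = (m + 1 : 𝕜) • iteratedDeriv m w 0 := by
  rw [iteratedDeriv_succ]
  exact (hasDerivAt_iteratedDeriv_id_smul_zero m hw).deriv

end OneVariable

section Line

variable {𝕜 : Type*} [NontriviallyNormedField 𝕜] {E F : Type*} [NormedAddCommGroup E]
  [NormedSpace 𝕜 E] [NormedAddCommGroup F] [NormedSpace 𝕜 F]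

theorem iteratedDeriv_comp_add_smul {n : ℕ} {f : E → F} (hf : ContDiff 𝕜 n f) (x y : E) :
    iteratedDeriv n (fun t : 𝕜 => f (x + t • y))
      = fun t => iteratedFDeriv 𝕜 n f (x + t • y) (fun _ => y) := by
  induction n with
  | zero => funext t; simp
  | succ n ih =>
    rw [iteratedDeriv_succ, ih (hf.of_le (by simp))]
    funext t
    exact hf.contDiffAt.deriv_fderiv_add_smul

end Line

section Gradient

variable {E : Type*} [NormedAddCommGroup E] [InnerProductSpace ℝ E] [CompleteSpace E]

theorem ContDiff.gradient {n : WithTop ℕ∞} {f : E → ℝ} (hf : ContDiff ℝ (n + 1) f) :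
    ContDiff ℝ n (gradient f) :=
  (InnerProductSpace.toDual ℝ E).symm.contDiff.comp (hf.fderiv_right le_rfl)

theorem gradient_eq_add_fderiv_sub_of_inner_sub_eq {H : E → ℝ} {g : E → E} {x y : E}
    (hdg : ∀ z, ⟪g z, z - x⟫ = H z - H x) (hg : DifferentiableAt ℝ g y)
    (hsymm : ∀ u v, ⟪fderiv ℝ g y u, v⟫ = ⟪fderiv ℝ g y v, u⟫) :
    gradient H y = g y + fderiv ℝ g y (y - x) := by
  have hH : H = fun z => H x + ⟪g z, z - x⟫ := by
    funext z; rw [hdg]; ring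
  refine ext_inner_right ℝ fun u => ?_
  rw [inner_gradient_left, hH, fderiv_const_add, fderiv_inner_apply ℝ hg
    (differentiableAt_fun_id.sub_const x), fderiv_sub_const, fderiv_fun_id,
    ContinuousLinearMap.id_apply, hsymm, inner_add_left, real_inner_comm]

end Gradient

/-- If a discrete gradient `ḡ` of a `C^{κ+1}` function `H` is `C^κ` in its
second argument and its Jacobian in the second argument is symmetric for all `y`, then
`D^κ∇H(x)v^κ = (κ+1) · D₂^κḡ(x,x)v^κ`. -/
theorem symmetric_jacobian_discrete_gradient_derivative_relation
    (d κ : ℕ) (hκ : 1 ≤ κ)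
    (H : EuclideanSpace ℝ (Fin d) → ℝ) (hH : ContDiff ℝ (κ + 1) H)
    (g : EuclideanSpace ℝ (Fin d) → EuclideanSpace ℝ (Fin d) → EuclideanSpace ℝ (Fin d))
    (hdg : ∀ x y, ⟪g x y, y - x⟫ = H y - H x)
    (x : EuclideanSpace ℝ (Fin d))
    (hgk : ContDiff ℝ κ (g x))
    (hsymm : ∀ y u v : EuclideanSpace ℝ (Fin d),
      ⟪fderiv ℝ (g x) y u, v⟫ = ⟪fderiv ℝ (g x) y v, u⟫) :
    ∀ v : EuclideanSpace ℝ (Fin d),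
      iteratedFDeriv ℝ κ (gradient H) x (fun _ => v) =
        ((κ : ℝ) + 1) • iteratedFDeriv ℝ κ (g x) x (fun _ => v) := by
  intro v
  have hg : Differentiable ℝ (g x) := hgk.differentiable (mod_cast Nat.one_le_iff_ne_zero.mp hκ)
  have hline : deriv (fun t : ℝ => t • g x (x + t • v)) = fun t => gradient H (x + t • v) := by
    funext t
    rw [deriv_fun_smul differentiableAt_fun_id (by fun_prop), (hg _).deriv_comp_add_smul,
      gradient_eq_add_fderiv_sub_of_inner_sub_eq (hdg x) (hg _) (hsymm _), add_sub_cancel_left,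
      map_smul]
    simp only [deriv_id'', one_smul, add_comm]
  calc iteratedFDeriv ℝ κ (gradient H) x (fun _ => v)
      = iteratedDeriv κ (fun t : ℝ => gradient H (x + t • v)) 0 := by
        simp [iteratedDeriv_comp_add_smul hH.gradient]
    _ = iteratedDeriv (κ + 1) (fun t : ℝ => t • g x (x + t • v)) 0 := by
        rw [iteratedDeriv_succ', hline]
    _ = ((κ : ℝ) + 1) • iteratedFDeriv ℝ κ (g x) x (fun _ => v) := by
        rw [iteratedDeriv_succ_id_smul_zero κ (w := fun t => g x (x + t • v))
          (hgk.comp (by fun_prop)), iteratedDeriv_comp_add_smul hgk]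
        simp
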